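/- arXiv:2004.00606 — 3 statements merged into one kernel-verified Lean document; each statement's English description precedes it below -/
import Mathlib

section
/- For x, y real with 0 \u2264 x < 1, 0 \u2264 y < 1, and natural v, w \u2265 1 with x = (v-1)/v, y = (w-1)/w, the sum \u2211_{m=0}^\u221e x^{\u230a(m+3)/4\u230b} y^{\u230a(m+1)/4\u230b} equals (4vw - 3w - v + 1)/(v + w - 1). -/
theorem bipartite_expected_capture_time_pos1 (x y : ℝ)
    (hx0 : 0 ≤ x) (hx1 : x < 1) (hy0 : 0 ≤ y) (hy1 : y < 1)
    (v w : ℕ) (hv : 1 ≤ v) (hw : 1 ≤ w)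
    (hxv : x = ((v : ℝ) - 1) / (v : ℝ)) (hyw : y = ((w : ℝ) - 1) / (w : ℝ)) :
    ∑' m : ℕ, x ^ ((m + 3) / 4) * y ^ ((m + 1) / 4) =
      (4 * (v : ℝ) * (w : ℝ) - 3 * (w : ℝ) - (v : ℝ) + 1) / ((v : ℝ) + (w : ℝ) - 1) := by
  have hxy0 : 0 ≤ x * y := mul_nonneg hx0 hy0
  have hxy1 : x * y < 1 := by
    calc x * y ≤ x * 1 := by nlinarith
    _ = x := mul_one x
    _ < 1 := hx1
  set c : Fin 4 → ℝ := ![1, x, x, x * y] with hc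
  set g : ℕ × Fin 4 → ℝ := fun p => (x * y) ^ p.1 * c p.2 with hg
  have hgs : Summable g := by
    apply Summable.mul_of_nonneg (summable_geometric_of_lt_one hxy0 hxy1)
      Summable.of_finite
    · intro k; positivity
    · intro r
      fin_cases r <;> simp [hc] <;> positivity
  have key : ∀ p : ℕ × Fin 4,
      x ^ (((Nat.divModEquiv 4).symm p + 3) / 4) *
        y ^ (((Nat.divModEquiv 4).symm p + 1) / 4) = g p := by
    rintro ⟨k, r⟩
    have h1 : (k * 4 + (r : ℕ) + 3) / 4 = k + ((r : ℕ) + 3) / 4 := by omega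
    have h2 : (k * 4 + (r : ℕ) + 1) / 4 = k + ((r : ℕ) + 1) / 4 := by omega
    simp only [Nat.divModEquiv_symm_apply, h1, h2, hg, hc]
    fin_cases r <;> norm_num [pow_succ, mul_pow] <;> ring
  rw [← (Nat.divModEquiv 4).symm.tsum_eq, tsum_congr key,
    Summable.tsum_prod' hgs (fun _ => Summable.of_finite), tsum_congr (fun k => tsum_fintype _)]
  have hgeo := tsum_geometric_of_lt_one hxy0 hxy1
  have hsum : ∑' k : ℕ, ∑ r : Fin 4, g (k, r)
      = (1 + 2 * x + x * y) / (1 - x * y) := by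
    have : ∀ k : ℕ, ∑ r : Fin 4, g (k, r) = (x * y) ^ k * (1 + 2 * x + x * y) := by
      intro k
      simp [hg, hc, Fin.sum_univ_four]
      ring
    rw [tsum_congr this, tsum_mul_right, hgeo, div_eq_mul_inv]
    ring
  have hv1 : (1 : ℝ) ≤ (v : ℝ) := by exact_mod_cast hv
  have hw1 : (1 : ℝ) ≤ (w : ℝ) := by exact_mod_cast hw
  have hv0 : (v : ℝ) ≠ 0 := by linarith
  have hw0 : (w : ℝ) ≠ 0 := by linarith
  have hvw0 : (v : ℝ) * w ≠ 0 := mul_ne_zero hv0 hw0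
  have e1 : 1 + 2 * x + x * y
      = (4 * (v : ℝ) * w - 3 * w - v + 1) / ((v : ℝ) * w) := by
    rw [hxv, hyw]; field_simp; ring
  have e2 : 1 - x * y = ((v : ℝ) + w - 1) / ((v : ℝ) * w) := by
    rw [hxv, hyw]; field_simp; ring
  rw [hsum, e1, e2, div_div_div_comm, div_self hvw0, div_one]
end

section
/- For real numbers x, y with 0 \u2264 x < 1 and 0 \u2264 y < 1, \u2211_{m=0}^\u221e x^{\u230a(m+3)/4\u230b} y^{\u230a(m+1)/4\u230b} = (1 + 2x + xy)/(1 - xy). -/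
theorem bipartite_generating_identity (x y : ℝ)
    (hx0 : 0 ≤ x) (hx1 : x < 1) (hy0 : 0 ≤ y) (hy1 : y < 1) :
    ∑' m : ℕ, x ^ ((m + 3) / 4) * y ^ ((m + 1) / 4) = (1 + 2 * x + x * y) / (1 - x * y) := by
  set f : ℕ → ℝ := fun m => x ^ ((m + 3) / 4) * y ^ ((m + 1) / 4) with hf
  set c : Fin 4 → ℝ := ![1, x, x, x * y] with hc
  have hxy0 : 0 ≤ x * y := mul_nonneg hx0 hy0
  have hxy1 : x * y < 1 := by nlinarith
  have hg : Summable fun k : ℕ => (x * y) ^ k := summable_geometric_of_lt_one hxy0 hxy1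
  have hcs : Summable c := Summable.of_finite
  have hcnn : ∀ j, 0 ≤ c j := by
    intro j
    fin_cases j <;> simp [hc] <;> positivity
  have hF : Summable fun p : ℕ × Fin 4 => (x * y) ^ p.1 * c p.2 :=
    hg.mul_of_nonneg hcs (fun k => pow_nonneg hxy0 k) hcnn
  have key : ∀ p : ℕ × Fin 4, f ((Nat.divModEquiv 4).symm p) = (x * y) ^ p.1 * c p.2 := by
    rintro ⟨k, j⟩
    fin_cases j <;>
      simp only [Nat.divModEquiv_symm_apply, hf, hc] <;>
      norm_num <;>
      [ (have h1 : (k * 4 + 3) / 4 = k := by omega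
         have h2 : (k * 4 + 1) / 4 = k := by omega
         rw [h1, h2, mul_pow]);
        (have h1 : (k * 4 + 1 + 3) / 4 = k + 1 := by omega
         have h2 : (k * 4 + 1 + 1) / 4 = k := by omega
         rw [h1, h2, mul_pow, pow_succ]; ring);
        (have h1 : (k * 4 + 2 + 3) / 4 = k + 1 := by omega
         have h2 : (k * 4 + 2 + 1) / 4 = k := by omega
         rw [h1, h2, mul_pow, pow_succ]; ring);
        (have h1 : (k * 4 + 3 + 3) / 4 = k + 1 := by omega
         have h2 : (k * 4 + 3 + 1) / 4 = k + 1 := by omega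
         rw [h1, h2, mul_pow, pow_succ, pow_succ]; ring)]
  calc ∑' m, f m = ∑' p : ℕ × Fin 4, f ((Nat.divModEquiv 4).symm p) :=
        ((Nat.divModEquiv 4).symm.tsum_eq f).symm
    _ = ∑' p : ℕ × Fin 4, (x * y) ^ p.1 * c p.2 := tsum_congr key
    _ = (∑' k : ℕ, (x * y) ^ k) * ∑' j, c j := (Summable.tsum_mul_tsum hg hcs hF).symm
    _ = (1 + 2 * x + x * y) / (1 - x * y) := by
        rw [tsum_geometric_of_lt_one hxy0 hxy1, tsum_fintype]
        simp [hc, Fin.sum_univ_four]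
        field_simp
        ring
end

section
/- The characteristic polynomial of the 4\u00d74 real matrix M_even = [[0,0,1/(2k),0],[0,1/2,(2k-2)/(2k),0],[1/2,1/4,0,0],[0,0,0,1/2]] equals x\u2074 - x\u00b3 + ((k+1)/(8k)) x - 1/(16k), for any positive natural k. -/
open Polynomial in
theorem friendship_even_charpoly (k : ℕ) (hk : 0 < k) :
    Matrix.charpoly
        (!![0, 0, 1 / (2 * (k : ℝ)), 0;
            0, 1 / 2, (2 * (k : ℝ) - 2) / (2 * (k : ℝ)), 0;
            1 / 2, 1 / 4, 0, 0;
            0, 0, 0, 1 / 2] : Matrix (Fin 4) (Fin 4) ℝ) =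
      X ^ 4 - X ^ 3 + C (((k : ℝ) + 1) / (8 * (k : ℝ))) * X - C (1 / (16 * (k : ℝ))) := by
  have hk' : (k : ℝ) ≠ 0 := Nat.cast_ne_zero.mpr hk.ne'
  have e1 : (Fin.succ 2 : Fin 4) = 3 := rfl
  have e2 : (Fin.castSucc 2 : Fin 4) = 2 := rfl
  have e3 : Fin.succAbove (2 : Fin 4) (2 : Fin 3) = 3 := rfl
  apply Polynomial.funext
  intro x
  rw [Matrix.charpoly, ← coe_evalRingHom, RingHom.map_det]
  simp (config := { decide := true }) [Matrix.det_succ_row_zero, Fin.sum_univ_succ, Matrix.charmatrix_apply,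
    Matrix.diagonal_apply, e1, e2, e3]
  field_simp
  ring
end
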